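/- arXiv:1004.0739 — 2 statements merged into one kernel-verified Lean document; each statement's English description precedes it below -/
import Mathlib

section
/- Let β > 0 and v* ≤ β be reals. For every i ≥ 1, if k_i ≥ 0 and ℓ_i ≥ i·k_i·β with ℓ_i > 0, and ε_i = 1/i, then ℓ_i·(v* − ε_i)/(k_i + ℓ_i) ≥ v* − 2/i. Consequently, liminf_{i→∞} ℓ_i·(v* − ε_i)/(k_i + ℓ_i) ≥ v*. -/
open Filter

/-- Round-wise reward estimate for the infinite-memory optimal strategy:
each round i ≥ 1 has average reward at least v* − 2/i, and the liminf of the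
round averages is at least v*. -/
theorem stmt_1 (β vstar : ℝ) (hβ : 0 < β) (hv : vstar ≤ β)
    (k ℓ : ℕ → ℝ)
    (hk : ∀ i : ℕ, 1 ≤ i → 0 ≤ k i)
    (hℓpos : ∀ i : ℕ, 1 ≤ i → 0 < ℓ i)
    (hℓ : ∀ i : ℕ, 1 ≤ i → ℓ i ≥ (i : ℝ) * k i * β) :
    (∀ i : ℕ, 1 ≤ i →
      ℓ i * (vstar - 1 / (i : ℝ)) / (k i + ℓ i) ≥ vstar - 2 / (i : ℝ)) ∧
    liminf (fun i : ℕ => ℓ i * (vstar - 1 / (i : ℝ)) / (k i + ℓ i)) atTop ≥ vstar := by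
  have main : ∀ i : ℕ, 1 ≤ i →
      ℓ i * (vstar - 1 / (i : ℝ)) / (k i + ℓ i) ≥ vstar - 2 / (i : ℝ) := by
    intro i hi
    have hi1 : (1 : ℝ) ≤ (i : ℝ) := by exact_mod_cast hi
    have hipos : (0 : ℝ) < (i : ℝ) := by linarith
    have hK := hk i hi
    have hL := hℓpos i hi
    have hLi := hℓ i hi
    have hD : 0 < k i + ℓ i := by linarith
    have hεi : (1 / (i : ℝ)) * i = 1 := by field_simp
    have hε : 0 < 1 / (i : ℝ) := by positivity
    rw [ge_iff_le, le_div_iff₀ hD]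
    have h1 : (1 / (i : ℝ)) * ℓ i ≥ k i * β := by
      have := mul_le_mul_of_nonneg_left hLi (le_of_lt hε)
      calc k i * β = ((1 / (i : ℝ)) * i) * (k i * β) := by rw [hεi]; ring
        _ = (1 / (i : ℝ)) * ((i : ℝ) * k i * β) := by ring
        _ ≤ (1 / (i : ℝ)) * ℓ i := this
    have h2 : k i * vstar ≤ k i * β := mul_le_mul_of_nonneg_left hv hK
    have h3 : 2 / (i : ℝ) = 2 * (1 / (i : ℝ)) := by ring
    nlinarith [mul_pos hε hL, mul_nonneg (le_of_lt hε) hK]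
  refine ⟨main, ?_⟩
  have htend : Tendsto (fun i : ℕ => vstar - 2 / (i : ℝ)) atTop (nhds vstar) := by
    have h0 : Tendsto (fun i : ℕ => 2 / (i : ℝ)) atTop (nhds 0) := by
      simpa [div_eq_mul_inv] using ((tendsto_one_div_atTop_nhds_zero_nat (𝕜 := ℝ)).const_mul 2)
    simpa using tendsto_const_nhds.sub h0
  have hev : ∀ᶠ i : ℕ in atTop, vstar - 2 / (i : ℝ) ≤
      ℓ i * (vstar - 1 / (i : ℝ)) / (k i + ℓ i) := by
    filter_upwards [eventually_ge_atTop 1] with i hi using main i hi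
  have hbdd : IsBoundedUnder (· ≥ ·) atTop
      (fun i : ℕ => ℓ i * (vstar - 1 / (i : ℝ)) / (k i + ℓ i)) :=
    (htend.isBoundedUnder_ge).mono_ge hev
  have hub : ∀ᶠ i : ℕ in atTop,
      ℓ i * (vstar - 1 / (i : ℝ)) / (k i + ℓ i) ≤ max vstar 0 := by
    filter_upwards [eventually_ge_atTop 1] with i hi
    have hi1 : (1 : ℝ) ≤ (i : ℝ) := by exact_mod_cast hi
    have hK := hk i hi
    have hL := hℓpos i hi
    have hD : 0 < k i + ℓ i := by linarith
    have hε : 0 < 1 / (i : ℝ) := by positivity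
    rcases le_or_gt (vstar - 1 / (i : ℝ)) 0 with h | h
    · have : ℓ i * (vstar - 1 / (i : ℝ)) / (k i + ℓ i) ≤ 0 :=
        div_nonpos_of_nonpos_of_nonneg (mul_nonpos_of_nonneg_of_nonpos hL.le h) hD.le
      exact this.trans (le_max_right _ _)
    · have : ℓ i * (vstar - 1 / (i : ℝ)) / (k i + ℓ i) ≤ vstar := by
        rw [div_le_iff₀ hD]
        nlinarith
      exact this.trans (le_max_left _ _)
  have hcb : IsCoboundedUnder (· ≥ ·) atTop
      (fun i : ℕ => ℓ i * (vstar - 1 / (i : ℝ)) / (k i + ℓ i)) :=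
    IsBoundedUnder.isCoboundedUnder_ge ⟨max vstar 0, eventually_map.2 hub⟩
  calc vstar = liminf (fun i : ℕ => vstar - 2 / (i : ℝ)) atTop := (htend.liminf_eq).symm
    _ ≤ liminf (fun i : ℕ => ℓ i * (vstar - 1 / (i : ℝ)) / (k i + ℓ i)) atTop :=
      liminf_le_liminf hev htend.isBoundedUnder_ge hcb
end

section
/- Consider a play ω interleaving rounds of the form: k_i steps followed by ℓ_i steps, where during each round the reward sum over the k_i steps is at least −k_i·β and over the ℓ_i steps is at least ℓ_i·(v* − ε_i), with ε_i = 1/i, 0 ≤ k_i, ℓ_i ≥ i·k_i·β, ℓ_i ≥ 1, and all rewards bounded in absolute value by β ≥ v*, β > 0. Then liminf over the sequence of cumulative averages taken at round boundaries is at least v*. -/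
open Filter

/-- Cumulative average lower bound for the round-based infinite-memory strategy:
round i consists of k i steps whose reward sum is at least −k i·β followed by
ℓ i steps whose reward sum is at least ℓ i·(v* − 1/i); evaluating the running
average at the end of each round, the liminf is at least v*. -/
theorem stmt_11 (β vstar : ℝ) (hβ : 0 < β) (hv : vstar ≤ β)
    (k ℓ : ℕ → ℕ) (r : ℕ → ℝ)
    (hr : ∀ n : ℕ, |r n| ≤ β)
    (hℓone : ∀ i : ℕ, 1 ≤ i → 1 ≤ ℓ i)
    (hℓ : ∀ i : ℕ, 1 ≤ i → (ℓ i : ℝ) ≥ (i : ℝ) * (k i : ℝ) * β)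
    -- round boundaries
    (B : ℕ → ℕ) (hB0 : B 0 = 0)
    (hB : ∀ i : ℕ, 1 ≤ i → B i = B (i - 1) + k i + ℓ i)
    -- reward sum over the k i reachability steps of round i
    (hk : ∀ i : ℕ, 1 ≤ i →
      ∑ n ∈ Finset.Ico (B (i - 1)) (B (i - 1) + k i), r n ≥ -((k i : ℝ) * β))
    -- reward sum over the ℓ i mean-payoff steps of round i
    (hl : ∀ i : ℕ, 1 ≤ i →
      ∑ n ∈ Finset.Ico (B (i - 1) + k i) (B i), r n ≥ (ℓ i : ℝ) * (vstar - 1 / (i : ℝ))) :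
    liminf (fun i : ℕ => (∑ n ∈ Finset.range (B i), r n) / (B i : ℝ)) atTop ≥ vstar := by
  set f : ℕ → ℝ := fun i => (∑ n ∈ Finset.range (B i), r n) / (B i : ℝ) with hf
  have hBsucc : ∀ n : ℕ, B (n+1) = B n + k (n+1) + ℓ (n+1) := by
    intro n
    have h1 := hB (n+1) (by omega)
    simpa using h1
  have hBge : ∀ i : ℕ, i ≤ B i := by
    intro i
    induction i with
    | zero => omega
    | succ n ih =>
      have h1 := hBsucc n
      have h2 := hℓone (n+1) (by omega)
      omega
  have hBsum : ∀ i : ℕ, B i = ∑ j ∈ Finset.Ioc 0 i, (k j + ℓ j) := by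
    intro i
    induction i with
    | zero => simpa using hB0
    | succ n ih =>
      rw [Finset.sum_Ioc_succ_top (Nat.zero_le n), hBsucc n, ih]
      omega
  have hS : ∀ i : ℕ,
      (∑ j ∈ Finset.Ioc 0 i, (-((k j : ℝ) * β) + (ℓ j : ℝ) * (vstar - 1 / (j : ℝ))))
        ≤ ∑ n ∈ Finset.range (B i), r n := by
    intro i
    induction i with
    | zero => simp [hB0]
    | succ n ih =>
      have hk' := hk (n+1) (by omega)
      have hl' := hl (n+1) (by omega)
      simp only [Nat.add_sub_cancel] at hk' hl'
      have hb := hBsucc n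
      have hsplit : ∑ m ∈ Finset.range (B (n+1)), r m
          = (∑ m ∈ Finset.range (B n), r m)
            + ((∑ m ∈ Finset.Ico (B n) (B n + k (n+1)), r m)
            + (∑ m ∈ Finset.Ico (B n + k (n+1)) (B (n+1)), r m)) := by
        rw [Finset.range_eq_Ico,
          ← Finset.sum_Ico_consecutive r (Nat.zero_le (B n + k (n+1)))
            (by omega : B n + k (n+1) ≤ B (n+1)),
          ← Finset.sum_Ico_consecutive r (Nat.zero_le (B n)) (Nat.le_add_right _ _),
          add_assoc, ← Finset.range_eq_Ico]
      rw [Finset.sum_Ioc_succ_top (Nat.zero_le n), hsplit]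
      linarith [hk', hl', ih]
  -- upper bound for f
  have hfub : ∀ i : ℕ, f i ≤ β := by
    intro i
    rcases Nat.eq_zero_or_pos (B i) with h | h
    · simp [hf, h, hβ.le]
    · have hpos : (0:ℝ) < (B i : ℝ) := by exact_mod_cast h
      rw [hf]
      simp only
      rw [div_le_iff₀ hpos]
      calc ∑ n ∈ Finset.range (B i), r n ≤ ∑ n ∈ Finset.range (B i), β :=
            Finset.sum_le_sum fun n _ => (abs_le.mp (hr n)).2
        _ = β * (B i : ℝ) := by
            rw [Finset.sum_const, Finset.card_range]; simp [mul_comm]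
  have hcob : IsCoboundedUnder (· ≥ ·) atTop f :=
    (isBoundedUnder_of ⟨β, hfub⟩).isCoboundedUnder_ge
  rw [ge_iff_le]
  refine le_of_forall_pos_le_add ?_
  intro ε hε
  rw [← sub_le_iff_le_add]
  refine le_liminf_of_le hcob ?_
  set ε' := ε/2 with hε'
  have hε'pos : 0 < ε' := by positivity
  obtain ⟨N, hN⟩ := exists_nat_ge (4/ε')
  set G : ℕ → ℝ := fun j =>
      (-((k j : ℝ) * β) + (ℓ j : ℝ) * (vstar - 1 / (j : ℝ)))
        - (vstar - ε') * ((k j : ℝ) + (ℓ j : ℝ)) with hG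
  have hg : ∀ j : ℕ, N + 1 ≤ j → 0 ≤ G j := by
    intro j hj
    have hj1 : 1 ≤ j := by omega
    have hjR : (4:ℝ)/ε' ≤ (j:ℝ) := le_trans hN (by exact_mod_cast Nat.le_of_succ_le hj)
    have hj1R : (1:ℝ) ≤ (j:ℝ) := by exact_mod_cast hj1
    have hjpos : (0:ℝ) < (j:ℝ) := by linarith
    have hj4 : 4 ≤ (j:ℝ) * ε' := by
      have := (div_le_iff₀ hε'pos).mp hjR
      linarith
    have hinv : 1/(j:ℝ) ≤ ε'/4 := by
      rw [div_le_div_iff₀ hjpos (by norm_num)]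
      nlinarith
    have hk0 : (0:ℝ) ≤ (k j : ℝ) := Nat.cast_nonneg _
    have hl1 : (1:ℝ) ≤ (ℓ j : ℝ) := by exact_mod_cast hℓone j hj1
    have hℓj := hℓ j hj1
    have h2 : (ℓ j:ℝ) * (1/(j:ℝ)) ≤ (ℓ j:ℝ) * (ε'/4) :=
      mul_le_mul_of_nonneg_left hinv (by linarith)
    have h3 : (j:ℝ) * (k j:ℝ) * β * ε' ≤ (ℓ j:ℝ) * ε' :=
      mul_le_mul_of_nonneg_right hℓj hε'pos.le
    have h4 : 4 * ((k j:ℝ) * β) ≤ (j:ℝ) * ε' * ((k j:ℝ) * β) :=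
      mul_le_mul_of_nonneg_right hj4 (mul_nonneg hk0 hβ.le)
    have h5 : 0 ≤ (k j:ℝ) * (2*β - vstar) :=
      mul_nonneg hk0 (by linarith)
    have h6 : 0 ≤ (k j:ℝ) * ε' := mul_nonneg hk0 hε'pos.le
    simp only [hG]
    nlinarith [h2, h3, h4, h5, h6]
  set D : ℝ := ∑ j ∈ Finset.Ioc 0 N, G j with hD
  obtain ⟨M, hM⟩ := exists_nat_ge (|D|/ε')
  filter_upwards [eventually_ge_atTop (max N M + 1)] with i hi
  have hiN : N ≤ i := by omega
  have hBipos : (0:ℝ) < (B i : ℝ) := by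
    have h := hBge i
    exact_mod_cast (by omega : 0 < B i)
  have habs : |D| ≤ ε' * (B i : ℝ) := by
    have h1 : |D| ≤ (M:ℝ) * ε' := (div_le_iff₀ hε'pos).mp hM
    have h2 : (M:ℝ) ≤ (B i:ℝ) := by
      have := hBge i
      exact_mod_cast (by omega : M ≤ B i)
    nlinarith
  have hGsum : D ≤ ∑ j ∈ Finset.Ioc 0 i, G j := by
    rw [← Finset.sum_Ioc_consecutive G (Nat.zero_le N) hiN]
    have h0 : 0 ≤ ∑ j ∈ Finset.Ioc N i, G j :=
      Finset.sum_nonneg fun j hj => hg j (Finset.mem_Ioc.mp hj).1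
    linarith
  have hcast : (B i : ℝ) = ∑ j ∈ Finset.Ioc 0 i, ((k j:ℝ) + (ℓ j:ℝ)) := by
    rw [hBsum i]; push_cast; ring
  have hterm : (∑ j ∈ Finset.Ioc 0 i, G j) + (vstar - ε') * (B i:ℝ)
      = ∑ j ∈ Finset.Ioc 0 i, (-((k j:ℝ)*β) + (ℓ j:ℝ)*(vstar - 1/(j:ℝ))) := by
    rw [hcast, Finset.mul_sum, ← Finset.sum_add_distrib]
    refine Finset.sum_congr rfl fun j _ => ?_
    simp only [hG]
    ring
  have hmain : D + (vstar - ε') * (B i:ℝ) ≤ ∑ n ∈ Finset.range (B i), r n := by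
    have := hS i
    linarith [hGsum, hterm.ge, hterm.le]
  have hfi : f i = (∑ n ∈ Finset.range (B i), r n) / (B i : ℝ) := rfl
  rw [hfi, le_div_iff₀ hBipos]
  have hnd : -|D| ≤ D := neg_abs_le D
  nlinarith [habs, hmain, hnd]
end
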